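/- With the cutting setup above, the homomorphism S : T_ω(Q) → T_ω(Q_e) sends every Weyl-ordered Laurent monomial to a Weyl-ordered Laurent monomial: for t ∈ ℤ^V, S(Z^t) = Z^{t'} where t'_w = t_{p(w)} for all w ∈ V_e. -/

import Mathlib

/-- `∑_{i<j} t_{v_i} t_{v_j} Q(v_i, v_j)` along a list enumerating the vertices. -/
def offdiag {V : Type} (Q : V → V → ℤ) (t : V → ℤ) : List V → ℤ
  | [] => 0
  | v :: l => (l.map fun w => t v * t w * Q v w).sum + offdiag Q t l

/-- The image of a unit of `R` in the units of an `R`-algebra `A`. -/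
noncomputable def unitsMap {R A : Type} [CommRing R] [Ring A] [Algebra R A] (w : Rˣ) : Aˣ :=
  Units.map (algebraMap R A).toMonoidHom w

/-- The Weyl-ordered Laurent monomial `Z^t` with respect to an enumeration `l` of `V`. -/
noncomputable def weylList {R A V : Type} [CommRing R] [Ring A] [Algebra R A]
    (w : Rˣ) (Q : V → V → ℤ) (Z : V → Aˣ) (t : V → ℤ) (l : List V) : Aˣ :=
  unitsMap (A := A) w ^ (-(offdiag Q t l)) * (l.map fun v => Z v ^ t v).prod


/-!
`S` sends `Z_v` to the product of the `Z_w` over the fibre `p⁻¹(v)`. These factors commute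
because `Q_e` vanishes inside a fibre, so `S(Z_v ^ n)` is the product of the `Z_w ^ n`. Since `Q`
is the fibre-block sum of `Q_e`, the normalising exponent `∑_{i<j} t_{v_i} t_{v_j} Q(v_i, v_j)`
along an enumeration of `V` equals the one for `t'` along the concatenation of the fibres (the
terms inside a fibre vanish). Finally, a Weyl-ordered monomial does not depend on the enumeration:
swapping two adjacent factors changes the normalising exponent by exactly the commutation factor.
-/

theorem zpow_mul_eq_of_mul_eq {G : Type*} [Group G] {c a b : G} (hc : ∀ g, Commute c g)
    {q : ℤ} (h : a * b = c ^ q * (b * a)) (n : ℤ) :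
    a * b ^ n = c ^ (q * n) * (b ^ n * a) := by
  have hconj : a * b * a⁻¹ = c ^ q * b := by
    rw [h, mul_assoc, mul_assoc, mul_inv_cancel, mul_one]
  have hconj_zpow : a * b ^ n * a⁻¹ = c ^ (q * n) * b ^ n := by
    rw [← conj_zpow, hconj, ((hc b).zpow_left q).mul_zpow, ← zpow_mul]
  rw [← mul_assoc, ← hconj_zpow, inv_mul_cancel_right]

theorem zpow_mul_zpow_eq_of_mul_eq {G : Type*} [Group G] {c a b : G} (hc : ∀ g, Commute c g)
    {q : ℤ} (h : a * b = c ^ q * (b * a)) (m n : ℤ) :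
    a ^ m * b ^ n = c ^ (q * m * n) * (b ^ n * a ^ m) := by
  have h' : b ^ n * a = c ^ (-(q * n)) * (a * b ^ n) := by
    rw [zpow_mul_eq_of_mul_eq hc h, ← mul_assoc, ← zpow_add, neg_add_cancel, zpow_zero, one_mul]
  rw [zpow_mul_eq_of_mul_eq hc h' m, ← mul_assoc, ← zpow_add,
    show q * m * n + -(q * n) * m = 0 by ring, zpow_zero, one_mul]

theorem List.prod_zpow_of_pairwise_commute {G : Type*} [Group G] {l : List G}
    (h : l.Pairwise Commute) (n : ℤ) : l.prod ^ n = (l.map (· ^ n)).prod := by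
  induction h with
  | nil => simp
  | cons ha _ ih =>
    rw [List.prod_cons, (Commute.list_prod_right _ _ ha).mul_zpow, ih, List.map_cons,
      List.prod_cons]

section offdiag

variable {V W : Type}

theorem offdiag_append (Q : V → V → ℤ) (t : V → ℤ) (l₁ l₂ : List V) :
    offdiag Q t (l₁ ++ l₂) = offdiag Q t l₁ + offdiag Q t l₂
      + (l₁.map fun x => (l₂.map fun y => t x * t y * Q x y).sum).sum := by
  induction l₁ with
  | nil => simp [offdiag]
  | cons v l₁ ih => simp [offdiag, ih]; ring

theorem offdiag_eq_zero_of_pairwise (Q : V → V → ℤ) (t : V → ℤ) {l : List V}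
    (h : l.Pairwise fun x y => Q x y = 0) : offdiag Q t l = 0 := by
  induction h with
  | nil => rfl
  | cons hv _ ih =>
    rw [offdiag, ih, add_zero]
    exact List.sum_eq_zero fun z hz => by
      obtain ⟨y, hy, rfl⟩ := List.mem_map.1 hz
      rw [hv y hy, mul_zero]

variable (Q : V → V → ℤ) (Qe : W → W → ℤ) (t : V → ℤ) (s : W → ℤ) (f : V → List W)

theorem sum_map_sum_block (hs : ∀ v, ∀ x ∈ f v, s x = t v)
    (hQ : ∀ u v, ((f u).map fun x => ((f v).map fun y => Qe x y).sum).sum = Q u v) (u v : V) :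
    ((f u).map fun x => ((f v).map fun y => s x * s y * Qe x y).sum).sum = t u * t v * Q u v := by
  rw [← hQ, ← List.sum_map_mul_left]
  refine congrArg List.sum (List.map_congr_left fun x hx => ?_)
  rw [← List.sum_map_mul_left]
  refine congrArg List.sum (List.map_congr_left fun y hy => ?_)
  rw [hs u x hx, hs v y hy]

theorem sum_map_sum_flatMap (hs : ∀ v, ∀ x ∈ f v, s x = t v)
    (hQ : ∀ u v, ((f u).map fun x => ((f v).map fun y => Qe x y).sum).sum = Q u v)
    (u : V) (L : List V) :
    ((f u).map fun x => ((L.flatMap f).map fun y => s x * s y * Qe x y).sum).sum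
      = (L.map fun v => t u * t v * Q u v).sum := by
  induction L with
  | nil => simp
  | cons v L ih =>
    simp only [List.flatMap_cons, List.map_append, List.sum_append, List.sum_map_add, ih,
      sum_map_sum_block Q Qe t s f hs hQ, List.map_cons, List.sum_cons]

theorem offdiag_flatMap (hs : ∀ v, ∀ x ∈ f v, s x = t v)
    (hQ : ∀ u v, ((f u).map fun x => ((f v).map fun y => Qe x y).sum).sum = Q u v)
    (h0 : ∀ v, (f v).Pairwise fun x y => Qe x y = 0) (L : List V) :
    offdiag Qe s (L.flatMap f) = offdiag Q t L := by
  induction L with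
  | nil => rfl
  | cons v L ih =>
    rw [List.flatMap_cons, offdiag_append, ih, offdiag_eq_zero_of_pairwise _ _ (h0 v),
      sum_map_sum_flatMap Q Qe t s f hs hQ, offdiag]
    ring

end offdiag

section weylList

variable {R A : Type} [CommRing R] [Ring A] [Algebra R A] (w : Rˣ)

theorem unitsMap_commute (u : Aˣ) : Commute (unitsMap (A := A) w) u :=
  Units.ext (Algebra.commutes _ _)

theorem Units.map_unitsMap {B : Type} [Ring B] [Algebra R B] (S : A →ₐ[R] B) :
    Units.map (S : A →* B) (unitsMap w) = unitsMap w :=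
  Units.ext (S.commutes _)

variable {V : Type} (Q : V → V → ℤ) (Z : V → Aˣ) (t : V → ℤ)

theorem weylList_cons (x : V) (l : List V) :
    weylList w Q Z t (x :: l)
      = unitsMap w ^ (-(l.map fun y => t x * (t y * Q x y)).sum)
        * (Z x ^ t x * weylList w Q Z t l) := by
  simp only [weylList, offdiag, List.map_cons, List.prod_cons, neg_add, zpow_add, mul_assoc]
  rw [← mul_assoc (Z x ^ t x), ← ((unitsMap_commute w _).zpow_left _).eq, mul_assoc]

theorem weylList_perm (hQ : ∀ x y, Q x y = - Q y x)
    (hrel : ∀ x y, Z x * Z y = unitsMap w ^ (2 * Q x y) * (Z y * Z x))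
    {l₁ l₂ : List V} (h : l₁.Perm l₂) :
    weylList w Q Z t l₁ = weylList w Q Z t l₂ := by
  have hc : ∀ (m : ℤ) (u : Aˣ), Commute (unitsMap w ^ m) u :=
    fun m u => (unitsMap_commute w u).zpow_left m
  induction h with
  | nil => rfl
  | cons x h ih => rw [weylList_cons, weylList_cons, ih, (h.map _).sum_eq]
  | swap x y l =>
    simp only [weylList_cons, List.map_cons, List.sum_cons]
    rw [← (hc _ (Z y ^ t y)).left_comm, ← (hc _ (Z x ^ t x)).left_comm, ← mul_assoc (Z y ^ t y),
      zpow_mul_zpow_eq_of_mul_eq (unitsMap_commute w) (hrel y x)]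
    simp only [← mul_assoc, ← zpow_add]
    congr 4
    rw [hQ y x]
    ring
  | trans _ _ ih₁ ih₂ => exact ih₁.trans ih₂

variable {B : Type} [Ring B] [Algebra R B]

theorem AlgHom.units_map_weylList (S : A →ₐ[R] B) (l : List V) :
    Units.map (S : A →* B) (weylList w Q Z t l)
      = weylList w Q (fun v => Units.map (S : A →* B) (Z v)) t l := by
  simp only [weylList, map_mul, map_zpow, Units.map_unitsMap, map_list_prod, List.map_map,
    Function.comp_def]

variable {W : Type} (Qe : W → W → ℤ) (Ze : W → Aˣ) (s : W → ℤ) (f : V → List W)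

theorem weylList_flatMap
    (hrel : ∀ x y, Ze x * Ze y = unitsMap w ^ (2 * Qe x y) * (Ze y * Ze x))
    (hs : ∀ v, ∀ x ∈ f v, s x = t v)
    (hQ : ∀ u v, ((f u).map fun x => ((f v).map fun y => Qe x y).sum).sum = Q u v)
    (h0 : ∀ v, (f v).Pairwise fun x y => Qe x y = 0)
    (hZ : ∀ v, Z v = ((f v).map Ze).prod) (L : List V) :
    weylList w Q Z t L = weylList w Qe Ze s (L.flatMap f) := by
  have hcomm : ∀ v, ((f v).map Ze).Pairwise Commute := fun v =>
    List.pairwise_map.2 ((h0 v).imp fun {x y} h => by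
      show Ze x * Ze y = Ze y * Ze x
      simpa [h] using hrel x y)
  rw [weylList, weylList, offdiag_flatMap Q Qe t s f hs hQ h0, List.map_flatMap,
    List.flatMap_def, List.prod_flatten, List.map_map]
  refine congrArg _ (congrArg _ (List.map_congr_left fun v _ => ?_))
  rw [Function.comp_apply, hZ, List.prod_zpow_of_pairwise_commute (hcomm v), List.map_map]
  exact congrArg _ (List.map_congr_left fun x hx => by simp [hs v x hx])

end weylList

theorem Finset.sum_map_sort {α M : Type*} [LinearOrder α] [AddCommMonoid M] (s : Finset α)
    (g : α → M) : ((s.sort (· ≤ ·)).map g).sum = ∑ x ∈ s, g x :=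
  ((s.sort_perm_toList _).map g).sum_eq.trans (s.sum_map_toList g)

theorem Finset.flatMap_sort_fiber_perm {α β : Type*} [Fintype α] [LinearOrder α] [Fintype β]
    [LinearOrder β] (p : β → α) :
    ((univ.sort (· ≤ ·)).flatMap fun a => (univ.filter fun x => p x = a).sort (· ≤ ·)).Perm
      (univ.sort (· ≤ ·)) := by
  refine List.perm_of_nodup_nodup_toFinset_eq ?_ (sort_nodup _ _) ?_
  · refine List.nodup_flatMap.2 ⟨fun a _ => sort_nodup _ _, (sort_nodup _ _).imp ?_⟩
    intro a b hab x hxa hxb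
    simp only [mem_sort, mem_filter] at hxa hxb
    exact hab (hxa.2.symm.trans hxb.2)
  · ext x
    simp [List.mem_flatMap, mem_sort]

theorem stmt13_general {R : Type} [CommRing R] (w : Rˣ)
    {V Ve : Type} [Fintype V] [LinearOrder V] [Fintype Ve] [LinearOrder Ve]
    (p : Ve → V)
    (Qe : Ve → Ve → ℤ) (hQe : ∀ x y, Qe x y = - Qe y x)
    (hQe0 : ∀ x y, x ≠ y → p x = p y → Qe x y = 0)
    (Q : V → V → ℤ)
    (hQ : ∀ u v, Q u v = ∑ x ∈ Finset.univ.filter (fun x => p x = u),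
        ∑ y ∈ Finset.univ.filter (fun y => p y = v), Qe x y)
    (A Ae : Type) [Ring A] [Algebra R A] [Ring Ae] [Algebra R Ae]
    (Z : V → Aˣ) (Ze : Ve → Aeˣ)
    (hrele : ∀ x y, Ze x * Ze y = unitsMap (A := Ae) w ^ (2 * Qe x y) * (Ze y * Ze x))
    (S : A →ₐ[R] Ae)
    (hS : ∀ v, S ((Z v : A)) =
      (((Finset.univ.filter fun x => p x = v).sort (· ≤ ·)).map
        fun x => ((Ze x : Ae))).prod) :
    ∀ t : V → ℤ,
      S ((weylList w Q Z t (Finset.univ.sort (· ≤ ·)) : Aˣ) : A)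
        = ((weylList w Qe Ze (fun x => t (p x)) (Finset.univ.sort (· ≤ ·)) : Aeˣ) : Ae) := by
  intro t
  set fiber : V → List Ve := fun v => (Finset.univ.filter fun x => p x = v).sort (· ≤ ·)
  have hfiber : ∀ v, ∀ x ∈ fiber v, p x = v := fun v x hx =>
    (Finset.mem_filter.1 ((Finset.mem_sort _).1 hx)).2
  have hblock : ∀ u v, ((fiber u).map fun x => ((fiber v).map fun y => Qe x y).sum).sum = Q u v :=
    fun u v => by simp only [fiber, Finset.sum_map_sort, hQ]
  have h0 : ∀ v, (fiber v).Pairwise fun x y => Qe x y = 0 := fun v =>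
    (Finset.sort_nodup _ _).imp_of_mem fun hx hy hxy =>
      hQe0 _ _ hxy ((hfiber v _ hx).trans (hfiber v _ hy).symm)
  have hZ : ∀ v, Units.map (S : A →* Ae) (Z v) = ((fiber v).map Ze).prod := fun v =>
    Units.ext (by rw [Units.coe_map, MonoidHom.coe_coe, hS, ← Units.coeHom_apply,
      map_list_prod, List.map_map]; rfl)
  calc S ((weylList w Q Z t (Finset.univ.sort (· ≤ ·)) : Aˣ) : A)
      = (Units.map (S : A →* Ae) (weylList w Q Z t (Finset.univ.sort (· ≤ ·))) : Ae) := rfl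
    _ = weylList w Qe Ze (fun x => t (p x)) ((Finset.univ.sort (· ≤ ·)).flatMap fiber) := by
      rw [AlgHom.units_map_weylList, weylList_flatMap w Q _ t Qe Ze (fun x => t (p x)) fiber hrele
        (fun v x hx => by rw [hfiber v x hx]) hblock h0 hZ]
    _ = _ := by
      rw [weylList_perm w Qe Ze _ hQe hrele (Finset.flatMap_sort_fiber_perm p)]

/-- In the cutting setup, the splitting homomorphism `S` (determined by
`S(Z_v) = ∏_{w ∈ p⁻¹(v)} Z_w`) sends every Weyl-ordered Laurent monomial to a
Weyl-ordered Laurent monomial: `S(Z^t) = Z^{t'}` with `t'_w = t_{p(w)}`. -/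
theorem stmt13 {R : Type} [CommRing R] (w σ : Rˣ) (hσ : σ * σ = w)
    {V Ve : Type} [Fintype V] [LinearOrder V] [Fintype Ve] [LinearOrder Ve]
    (p : Ve → V) (hp : Function.Surjective p)
    (hfib : ∀ v, (Finset.univ.filter fun x => p x = v).card ≤ 2)
    (Qe : Ve → Ve → ℤ) (hQe : ∀ x y, Qe x y = - Qe y x)
    (hQe0 : ∀ x y, x ≠ y → p x = p y → Qe x y = 0)
    (Q : V → V → ℤ) (hQanti : ∀ u v, Q u v = - Q v u)
    (hQ : ∀ u v, Q u v = ∑ x ∈ Finset.univ.filter (fun x => p x = u),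
        ∑ y ∈ Finset.univ.filter (fun y => p y = v), Qe x y)
    (A Ae : Type) [Ring A] [Algebra R A] [Ring Ae] [Algebra R Ae]
    (Z : V → Aˣ) (Ze : Ve → Aeˣ)
    (hrel : ∀ v v', Z v * Z v' = unitsMap (A := A) w ^ (2 * Q v v') * (Z v' * Z v))
    (hrele : ∀ x y, Ze x * Ze y = unitsMap (A := Ae) w ^ (2 * Qe x y) * (Ze y * Ze x))
    (S : A →ₐ[R] Ae)
    (hS : ∀ v, S ((Z v : A)) =
      (((Finset.univ.filter fun x => p x = v).sort (· ≤ ·)).map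
        fun x => ((Ze x : Ae))).prod) :
    ∀ t : V → ℤ,
      S ((weylList w Q Z t (Finset.univ.sort (· ≤ ·)) : Aˣ) : A)
        = ((weylList w Qe Ze (fun x => t (p x)) (Finset.univ.sort (· ≤ ·)) : Aeˣ) : Ae) :=
  stmt13_general w p Qe hQe hQe0 Q hQ A Ae Z Ze hrele S hS
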